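/- arXiv:2103.16990 — 3 statements merged into one kernel-verified Lean document; each statement's English description precedes it below -/
import Mathlib

section
/- Let k be a field and f a nonzero element of k[x,y]. Then the polynomial uv - f is irreducible in the polynomial ring k[x,y][u,v]. -/
open MvPolynomial

section Aux

variable {R : Type*} [CommRing R] [IsDomain R] [UniqueFactorizationMonoid R]

theorem aux_irred (f : R) (hf : f ≠ 0) :
    Irreducible (Polynomial.X * Polynomial.C Polynomial.X
      - Polynomial.C (Polynomial.C f) : Polynomial (Polynomial R)) := by
  letI : NormalizationMonoid (Polynomial R) :=
    UniqueFactorizationMonoid.normalizationMonoid.toNormalizationMonoid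
  letI : NormalizedGCDMonoid (Polynomial R) :=
    UniqueFactorizationMonoid.toNormalizedGCDMonoid (Polynomial R)
  have hprim : (Polynomial.X * Polynomial.C Polynomial.X
      - Polynomial.C (Polynomial.C f) : Polynomial (Polynomial R)).IsPrimitive := by
    intro r hr
    rw [Polynomial.C_dvd_iff_dvd_coeff] at hr
    have h1 := hr 1
    have h0 := hr 0
    simp [Polynomial.coeff_sub] at h1 h0
    rcases (Polynomial.irreducible_X (R := R)).isUnit_or_isUnit h1.choose_spec with h | h
    · exact h
    · exfalso
      have hassoc : Associated r (Polynomial.X : Polynomial R) :=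
        ⟨h.unit, by rw [IsUnit.unit_spec]; exact h1.choose_spec.symm⟩
      have hXr : (Polynomial.X : Polynomial R) ∣ r := hassoc.symm.dvd
      have : (Polynomial.X : Polynomial R) ∣ Polynomial.C f := hXr.trans h0
      rw [Polynomial.X_dvd_iff, Polynomial.coeff_C_zero] at this
      exact hf this
  rw [hprim.irreducible_iff_irreducible_map_fraction_map
    (K := FractionRing (Polynomial R))]
  rw [Polynomial.map_sub, Polynomial.map_mul, Polynomial.map_X, Polynomial.map_C,
    Polynomial.map_C]
  apply Polynomial.irreducible_of_degree_eq_one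
  have hX : (algebraMap (Polynomial R) (FractionRing (Polynomial R))) Polynomial.X ≠ 0 := by
    simpa using (IsFractionRing.to_map_eq_zero_iff
      (K := FractionRing (Polynomial R))).not.mpr Polynomial.X_ne_zero
  rw [show (Polynomial.X * Polynomial.C ((algebraMap (Polynomial R) (FractionRing (Polynomial R))) Polynomial.X)
      - Polynomial.C ((algebraMap (Polynomial R) (FractionRing (Polynomial R))) (Polynomial.C f)))
      = Polynomial.C ((algebraMap (Polynomial R) (FractionRing (Polynomial R))) Polynomial.X) * Polynomial.X
      + Polynomial.C (-(algebraMap (Polynomial R) (FractionRing (Polynomial R))) (Polynomial.C f)) by ring_nf; rw [map_neg]; ring]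
  exact Polynomial.degree_linear hX

end Aux

/-- For a field `k` and nonzero `f ∈ k[x,y]`, the polynomial `uv - f` is irreducible
in `k[x,y][u,v]`, where `u = X 0` and `v = X 1`. -/
theorem uv_sub_f_irreducible (k : Type*) [Field k]
    (f : MvPolynomial (Fin 2) k) (hf : f ≠ 0) :
    Irreducible ((X 0 : MvPolynomial (Fin 2) (MvPolynomial (Fin 2) k)) * X 1 - C f) := by
  let R := MvPolynomial (Fin 2) k
  let e₁ : MvPolynomial (Fin 1) R ≃ₐ[R] Polynomial R :=
    (finSuccEquiv R 0).trans (Polynomial.mapAlgEquiv (isEmptyAlgEquiv R (Fin 0)))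
  let e : MvPolynomial (Fin 2) R ≃ₐ[R] Polynomial (Polynomial R) :=
    (finSuccEquiv R 1).trans (Polynomial.mapAlgEquiv e₁)
  rw [← MulEquiv.irreducible_iff e.toMulEquiv]
  have hez : e (X 0) = Polynomial.X := by
    show Polynomial.mapAlgEquiv e₁ (finSuccEquiv R 1 (X 0)) = _
    rw [finSuccEquiv_X_zero, Polynomial.coe_mapAlgEquiv, Polynomial.map_X]
  have he₁ : e₁ (X 0) = Polynomial.X := by
    show Polynomial.mapAlgEquiv (isEmptyAlgEquiv R (Fin 0)) (finSuccEquiv R 0 (X 0)) = _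
    rw [finSuccEquiv_X_zero, Polynomial.coe_mapAlgEquiv, Polynomial.map_X]
  have heo : e (X 1) = Polynomial.C Polynomial.X := by
    show Polynomial.mapAlgEquiv e₁ (finSuccEquiv R 1 (X 1)) = _
    rw [show (1 : Fin 2) = Fin.succ 0 from rfl, finSuccEquiv_X_succ,
      Polynomial.coe_mapAlgEquiv, Polynomial.map_C]
    congr 1
  have hec : e (C f) = Polynomial.C (Polynomial.C f) := by
    have := e.commutes f
    rwa [algebraMap_eq, Polynomial.algebraMap_apply, Polynomial.algebraMap_apply,
      Algebra.algebraMap_self, RingHom.id_apply] at this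
  show Irreducible (e ((X 0 : MvPolynomial (Fin 2) R) * X 1 - C f))
  rw [map_sub, map_mul, hez, heo, hec]
  exact aux_irred f hf
end

section
/- Let k be a field and f a nonzero element of k[x,y]. Then the quotient ring k[x,y][u,v]/(uv - f) is an integral domain. -/
open MvPolynomial

/-- A linear polynomial `C a * X + C b` over a domain is irreducible if `a ≠ 0` and
the common divisors of `a` and `b` are units. -/
lemma linear_irreducible_aux {S : Type*} [CommRing S] [IsDomain S] {a b : S}
    (ha : a ≠ 0) (hcop : ∀ c : S, c ∣ a → c ∣ b → IsUnit c) :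
    Irreducible (Polynomial.C a * Polynomial.X + Polynomial.C b) := by
  set p := Polynomial.C a * Polynomial.X + Polynomial.C b with hp
  have hdeg : p.natDegree = 1 := Polynomial.natDegree_linear ha
  have hp0 : p ≠ 0 := by
    intro h0
    rw [h0] at hdeg
    simp at hdeg
  have key : ∀ g h : Polynomial S, p = g * h → h.natDegree = 0 → IsUnit h := by
    intro g h hgh hh0
    obtain ⟨c, rfl⟩ := Polynomial.natDegree_eq_zero.mp hh0
    have hCc : Polynomial.C c ∣ p := ⟨g, by rw [hgh, mul_comm]⟩
    have hcoeff := (Polynomial.C_dvd_iff_dvd_coeff c p).mp hCc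
    have h1 : c ∣ a := by have := hcoeff 1; simpa [hp] using this
    have h0 : c ∣ b := by have := hcoeff 0; simpa [hp] using this
    exact Polynomial.isUnit_C.mpr (hcop c h1 h0)
  constructor
  · exact Polynomial.not_isUnit_of_natDegree_pos p (by omega)
  · intro g h hgh
    have hg0 : g ≠ 0 := by rintro rfl; simp at hgh; exact hp0 hgh
    have hh0 : h ≠ 0 := by rintro rfl; simp at hgh; exact hp0 hgh
    have hsum : g.natDegree + h.natDegree = 1 := by
      rw [← Polynomial.natDegree_mul hg0 hh0, ← hgh, hdeg]
    rcases Nat.add_eq_one_iff.mp hsum with ⟨hg, _⟩ | ⟨_, hh⟩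
    · exact Or.inl (key h g (by rw [hgh, mul_comm]) hg)
    · exact Or.inr (key g h hgh hh)

/-- `C X * X - C (C f)` is prime in `R[X][X]` for `f ≠ 0`. -/
lemma prime_aux {R : Type*} [CommRing R] [IsDomain R] [UniqueFactorizationMonoid R]
    {f : R} (hf : f ≠ 0) :
    Prime (Polynomial.C (Polynomial.X : Polynomial R) * Polynomial.X
      - Polynomial.C (Polynomial.C f)) := by
  rw [sub_eq_add_neg, ← Polynomial.C_neg]
  refine UniqueFactorizationMonoid.irreducible_iff_prime.mp
    (linear_irreducible_aux Polynomial.X_ne_zero ?_)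
  intro c hcX hcf
  obtain ⟨d, hd⟩ := hcX
  rcases Polynomial.prime_X.irreducible.isUnit_or_isUnit hd with h | h
  · exact h
  · exfalso
    have hXc : (Polynomial.X : Polynomial R) ∣ c :=
      ⟨(h.unit⁻¹ : Units _), by rw [hd, mul_assoc, IsUnit.mul_val_inv, mul_one]⟩
    have : (Polynomial.X : Polynomial R) ∣ Polynomial.C f :=
      dvd_neg.mp (hXc.trans hcf)
    rw [Polynomial.X_dvd_iff, Polynomial.coeff_C] at this
    exact hf (by simpa using this)

/-- For a field `k` and nonzero `f ∈ k[x,y]`, the quotient `k[x,y][u,v]/(uv - f)`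
is an integral domain. -/
theorem quotient_uv_sub_f_isDomain (k : Type*) [Field k]
    (f : MvPolynomial (Fin 2) k) (hf : f ≠ 0) :
    IsDomain (MvPolynomial (Fin 2) (MvPolynomial (Fin 2) k) ⧸
      Ideal.span {(X 0 : MvPolynomial (Fin 2) (MvPolynomial (Fin 2) k)) * X 1 - C f}) := by
  let R := MvPolynomial (Fin 2) k
  let ψ : MvPolynomial (Fin 1) R ≃+* Polynomial R :=
    ((finSuccEquiv R 0).trans (Polynomial.mapAlgEquiv (isEmptyAlgEquiv R (Fin 0)))).toRingEquiv
  let e : MvPolynomial (Fin 2) R ≃+* Polynomial (Polynomial R) :=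
    (finSuccEquiv R 1).toRingEquiv.trans (Polynomial.mapEquiv ψ)
  have hψX : ψ (X 0) = Polynomial.X := by
    simp [ψ, finSuccEquiv_apply]
  have hψC : ψ (C f) = Polynomial.C f := by
    simp [ψ, finSuccEquiv_apply]
    exact MvPolynomial.coeff_zero_C (σ := Fin 0) f
  have hX1 : (X 1 : MvPolynomial (Fin 2) R) = X (Fin.succ 0) := rfl
  have h1 : finSuccEquiv R 1 ((X 0 : MvPolynomial (Fin 2) R) * X 1 - C f)
      = Polynomial.C (X 0) * Polynomial.X - Polynomial.C (C f) := by
    rw [map_sub, map_mul, finSuccEquiv_X_zero, hX1, finSuccEquiv_X_succ]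
    rw [mul_comm]
    congr 1
    simp [finSuccEquiv_apply]
  have he : e ((X 0 : MvPolynomial (Fin 2) R) * X 1 - C f)
      = Polynomial.C (Polynomial.X : Polynomial R) * Polynomial.X
        - Polynomial.C (Polynomial.C f) := by
    show Polynomial.map (ψ : MvPolynomial (Fin 1) R →+* Polynomial R)
      (finSuccEquiv R 1 ((X 0 : MvPolynomial (Fin 2) R) * X 1 - C f)) = _
    rw [h1, Polynomial.map_sub, Polynomial.map_mul, Polynomial.map_C, Polynomial.map_C,
      Polynomial.map_X]
    rw [show ((ψ : MvPolynomial (Fin 1) R →+* Polynomial R) (X 0)) = Polynomial.X from hψX,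
      show ((ψ : MvPolynomial (Fin 1) R →+* Polynomial R) (C f)) = Polynomial.C f from hψC]
  have hprime : Prime ((X 0 : MvPolynomial (Fin 2) R) * X 1 - C f) := by
    rw [← MulEquiv.prime_iff (M := MvPolynomial (Fin 2) R) (N := Polynomial (Polynomial R)) e]
    show Prime (e _)
    rw [he]
    exact prime_aux hf
  have hne : ((X 0 : MvPolynomial (Fin 2) R) * X 1 - C f) ≠ 0 := hprime.ne_zero
  haveI := (Ideal.span_singleton_prime hne).mpr hprime
  exact Ideal.Quotient.isDomain _
end

section
/- Let A = ℂ⟨x,y⟩/I be the quotient of the free associative ℂ-algebra on two generators by the two-sided ideal I generated by x² and xy + yx. Then A is infinite dimensional as a ℂ-vector space; more precisely, the images of the elements yⁿ (n ≥ 0) in A are linearly independent. -/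
noncomputable section

/-- The generators `x` and `y` of the free associative ℂ-algebra `ℂ⟨x,y⟩` on two
generators. -/
def xGen : FreeAlgebra ℂ (Fin 2) := FreeAlgebra.ι ℂ 0
def yGen : FreeAlgebra ℂ (Fin 2) := FreeAlgebra.ι ℂ 1

/-- The relations `x² = 0` and `xy + yx = 0`; quotienting the free algebra by the
ring congruence they generate is the quotient by the two-sided ideal generated by
`x²` and `xy + yx`. -/
inductive contRel : FreeAlgebra ℂ (Fin 2) → FreeAlgebra ℂ (Fin 2) → Prop
  | xsq : contRel (xGen * xGen) 0
  | anticomm : contRel (xGen * yGen + yGen * xGen) 0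

/-- Map to polynomials sending `x ↦ 0`, `y ↦ X`. -/
def toPoly : FreeAlgebra ℂ (Fin 2) →ₐ[ℂ] Polynomial ℂ :=
  FreeAlgebra.lift ℂ (fun i => if i = 0 then 0 else Polynomial.X)

lemma toPoly_x : toPoly xGen = 0 := by simp [toPoly, xGen]

lemma toPoly_y : toPoly yGen = Polynomial.X := by simp [toPoly, yGen]

/-- The induced map on the quotient. -/
def quotToPoly : RingQuot contRel →ₐ[ℂ] Polynomial ℂ :=
  RingQuot.liftAlgHom ℂ ⟨toPoly, by
    intro a b h
    cases h with
    | xsq => simp [toPoly_x]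
    | anticomm => simp [toPoly_x, toPoly_y]⟩

/-- The algebra `A = ℂ⟨x,y⟩/(x², xy + yx)` is infinite dimensional over ℂ; more
precisely, the images of the powers `yⁿ` (`n ≥ 0`) are linearly independent in `A`. -/
theorem contraction_algebra_infinite_dimensional :
    LinearIndependent ℂ (fun n : ℕ => (RingQuot.mkAlgHom ℂ contRel yGen) ^ n) ∧
      ¬ Module.Finite ℂ (RingQuot contRel) := by
  have hli : LinearIndependent ℂ (fun n : ℕ => (RingQuot.mkAlgHom ℂ contRel yGen) ^ n) := by
    apply LinearIndependent.of_comp quotToPoly.toLinearMap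
    have : (quotToPoly.toLinearMap ∘ fun n : ℕ => (RingQuot.mkAlgHom ℂ contRel yGen) ^ n)
        = fun n : ℕ => (Polynomial.X : Polynomial ℂ) ^ n := by
      funext n
      simp only [Function.comp_apply, AlgHom.toLinearMap_apply, map_pow]
      have : quotToPoly (RingQuot.mkAlgHom ℂ contRel yGen) = Polynomial.X := by
        simp [quotToPoly, RingQuot.liftAlgHom_mkAlgHom_apply, toPoly_y]
      rw [this]
    rw [this]
    simpa [Polynomial.X_pow_eq_monomial] using
      (Polynomial.basisMonomials ℂ).linearIndependent
  refine ⟨hli, fun hfin => ?_⟩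
  exact Module.Finite.not_linearIndependent_of_infinite _ hli
end
end
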